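/- arXiv:2404.05360 — 4 statements merged into one kernel-verified Lean document; each statement's English description precedes it below -/
import Mathlib

section
/- Let $\nu > 0$. There is a constant $C_1$ depending only on $\nu$ such that for all $a_1,\dots,a_4 \geq 0$: $-(a_1 a_3 - a_2 a_4)\big(\ln((1+a_1)(1+a_3)) - \ln((1+a_2)(1+a_4))\big) + \frac{\nu}{2}\sum_{i=1}^4 \frac{a_1 a_3 + a_2 a_4}{1+a_i} \leq C_1 \sum_{i=1}^4 (1+a_i)\ln(1+a_i)$. -/
set_option maxHeartbeats 1000000

lemma logpair (s t : ℝ) (hs : 0 < s) (ht : 0 < t) :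
    0 ≤ (s - t) * (Real.log s - Real.log t) := by
  rcases le_total t s with h | h
  · exact mul_nonneg (by linarith) (by linarith [Real.log_le_log ht h])
  · have := mul_nonneg (by linarith : (0:ℝ) ≤ t - s)
      (by linarith [Real.log_le_log hs h] : (0:ℝ) ≤ Real.log t - Real.log s)
    nlinarith

lemma ent_ge (s : ℝ) (hs : 1 ≤ s) : s - 1 ≤ s * Real.log s := by
  have hs0 : (0:ℝ) < s := by linarith
  have h := Real.log_le_sub_one_of_pos (show (0:ℝ) < s⁻¹ by positivity)
  rw [Real.log_inv] at h
  have h2 : 1 - s⁻¹ ≤ Real.log s := by linarith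
  have h3 : s * (1 - s⁻¹) ≤ s * Real.log s := mul_le_mul_of_nonneg_left h2 (by linarith)
  have h4 : s * (1 - s⁻¹) = s - 1 := by field_simp
  linarith

lemma cross1 (K b c d e : ℝ) (hK : 2 ≤ K) (hb : 1 ≤ b) (hc : 1 ≤ c)
    (hd : 1 ≤ d) (he : 1 ≤ e) :
    (b - 1) * (d - 1) / c ≤
      2 / Real.log K * ((b * d - c * e) * (Real.log (b * d) - Real.log (c * e))) +
      (1 + K * Real.exp K) *
        (b * Real.log b + c * Real.log c + d * Real.log d + e * Real.log e) := by
  have hb0 : (0:ℝ) < b := by linarith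
  have hc0 : (0:ℝ) < c := by linarith
  have hd0 : (0:ℝ) < d := by linarith
  have he0 : (0:ℝ) < e := by linarith
  have hK0 : (0:ℝ) < K := by linarith
  have hx0 : 0 ≤ (b-1)*(d-1) := mul_nonneg (by linarith) (by linarith)
  have hu1 : (1:ℝ) ≤ b*d := one_le_mul_of_one_le_of_one_le hb hd
  have hv1 : (1:ℝ) ≤ c*e := one_le_mul_of_one_le_of_one_le hc he
  have hxu : (b-1)*(d-1) ≤ b*d := by nlinarith
  have hD0 : 0 ≤ (b*d - c*e) * (Real.log (b*d) - Real.log (c*e)) :=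
    logpair _ _ (by linarith) (by linarith)
  have hlogK : 0 < Real.log K := Real.log_pos (by linarith)
  have hSb : 0 ≤ b * Real.log b := mul_nonneg (by linarith) (Real.log_nonneg hb)
  have hSc : 0 ≤ c * Real.log c := mul_nonneg (by linarith) (Real.log_nonneg hc)
  have hSd : 0 ≤ d * Real.log d := mul_nonneg (by linarith) (Real.log_nonneg hd)
  have hSe : 0 ≤ e * Real.log e := mul_nonneg (by linarith) (Real.log_nonneg he)
  have hS0 : 0 ≤ b * Real.log b + c * Real.log c + d * Real.log d + e * Real.log e := by
    linarith
  have hKE : (0:ℝ) ≤ K * Real.exp K := by positivity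
  have hDterm : 0 ≤ 2 / Real.log K *
      ((b * d - c * e) * (Real.log (b * d) - Real.log (c * e))) :=
    mul_nonneg (by positivity) hD0
  have hKES : 0 ≤ (1 + K * Real.exp K) *
      (b * Real.log b + c * Real.log c + d * Real.log d + e * Real.log e) :=
    mul_nonneg (by positivity) hS0
  have hentb := ent_ge b hb
  have hentd := ent_ge d hd
  -- AM-GM: sqrt x ≤ (b + d - 2)/2
  have hsqx : Real.sqrt ((b-1)*(d-1)) ≤ (b + d - 2)/2 := by
    have h1 : (b-1)*(d-1) ≤ ((b + d - 2)/2)^2 := by nlinarith [sq_nonneg (b - d)]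
    calc Real.sqrt ((b-1)*(d-1)) ≤ Real.sqrt (((b + d - 2)/2)^2) := Real.sqrt_le_sqrt h1
      _ = (b + d - 2)/2 := Real.sqrt_sq (by linarith)
  by_cases hcase : (b-1)*(d-1) ≤ c^2
  · -- small case: x/c ≤ sqrt x ≤ (b+d-2)/2 ≤ S
    have hsc : Real.sqrt ((b-1)*(d-1)) ≤ c := by
      calc Real.sqrt ((b-1)*(d-1)) ≤ Real.sqrt (c^2) := Real.sqrt_le_sqrt hcase
        _ = c := Real.sqrt_sq (by linarith)
    have h1 : (b-1)*(d-1)/c ≤ Real.sqrt ((b-1)*(d-1)) := by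
      rw [div_le_iff₀ hc0]
      nlinarith [Real.sqrt_nonneg ((b-1)*(d-1)), Real.mul_self_sqrt hx0]
    nlinarith [mul_nonneg hKE hS0]
  · push_neg at hcase
    have hxc_le : (b-1)*(d-1)/c ≤ (b-1)*(d-1) := div_le_self hx0 hc
    by_cases h2 : K * (b*d) ≤ c*e
    · -- v ≥ K u : D ≥ u log K
      have hlog2 : Real.log K + Real.log (b*d) ≤ Real.log (c*e) := by
        have := Real.log_le_log (by positivity : (0:ℝ) < K*(b*d)) h2
        rwa [Real.log_mul (ne_of_gt hK0) (by positivity)] at this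
      have hg : (b*d) * Real.log K ≤
          (b*d - c*e) * (Real.log (b*d) - Real.log (c*e)) := by
        have e2 : b*d ≤ c*e - b*d := by nlinarith
        have e3 : 0 ≤ c*e - b*d := by linarith
        have : (b*d) * Real.log K ≤ (c*e - b*d) * Real.log K :=
          mul_le_mul_of_nonneg_right e2 hlogK.le
        have h4 : (c*e - b*d) * Real.log K ≤
            (c*e - b*d) * (Real.log (c*e) - Real.log (b*d)) :=
          mul_le_mul_of_nonneg_left (by linarith) e3
        nlinarith
      have hfin : b*d ≤ 2 / Real.log K *
          ((b * d - c * e) * (Real.log (b * d) - Real.log (c * e))) := by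
        rw [div_mul_eq_mul_div, le_div_iff₀ hlogK]
        nlinarith
      linarith
    · by_cases h3 : c*e ≤ (b*d)/K
      · -- v ≤ u/K : D ≥ (u/2) log K
        have hlog3 : Real.log (c*e) ≤ Real.log (b*d) - Real.log K := by
          have h5 := Real.log_le_log (by positivity : (0:ℝ) < c*e) h3
          rwa [Real.log_div (by positivity) (ne_of_gt hK0)] at h5
        have hg : (b*d)/2 * Real.log K ≤
            (b*d - c*e) * (Real.log (b*d) - Real.log (c*e)) := by
          have e2 : (b*d)/2 ≤ b*d - c*e := by
            have : c*e ≤ (b*d)/K := h3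
            have hK2' : (b*d)/K ≤ (b*d)/2 := by
              apply div_le_div_of_nonneg_left (by linarith) (by norm_num) hK
            linarith
          have e3 : 0 ≤ b*d - c*e := by linarith [div_nonneg (by linarith : (0:ℝ) ≤ b*d) (by norm_num : (0:ℝ) ≤ (2:ℝ))]
          have : (b*d)/2 * Real.log K ≤ (b*d - c*e) * Real.log K :=
            mul_le_mul_of_nonneg_right e2 hlogK.le
          have h4 : (b*d - c*e) * Real.log K ≤
              (b*d - c*e) * (Real.log (b*d) - Real.log (c*e)) :=
            mul_le_mul_of_nonneg_left (by linarith) e3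
          linarith
        have hfin : b*d ≤ 2 / Real.log K *
            ((b * d - c * e) * (Real.log (b * d) - Real.log (c * e))) := by
          rw [div_mul_eq_mul_div, le_div_iff₀ hlogK]
          nlinarith
        linarith
      · push_neg at h2 h3
        -- middle case: u/K < v < K u
        have hultKv : b*d < K*(c*e) := by
          rw [div_lt_iff₀ hK0] at h3; nlinarith
        by_cases h4 : Real.exp K ≤ e
        · -- e large: x/c ≤ K e ≤ e log e
          have hKloge : K ≤ Real.log e := (Real.le_log_iff_exp_le he0).2 h4
          have hxc : (b-1)*(d-1)/c ≤ K*e := by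
            rw [div_le_iff₀ hc0]
            nlinarith
          have hKe : K*e ≤ e * Real.log e := by nlinarith
          nlinarith [mul_nonneg hKE hS0]
        · push_neg at h4
          -- e small: sqrt x < K exp K
          have hcs : c ≤ Real.sqrt ((b-1)*(d-1)) :=
            (Real.le_sqrt (by linarith) hx0).2 (le_of_lt hcase)
          have hs0 : 0 < Real.sqrt ((b-1)*(d-1)) := by
            have : (1:ℝ) ≤ c^2 := by nlinarith
            nlinarith [Real.sqrt_nonneg ((b-1)*(d-1)), hcs]
          have hself : Real.sqrt ((b-1)*(d-1)) * Real.sqrt ((b-1)*(d-1)) = (b-1)*(d-1) :=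
            Real.mul_self_sqrt hx0
          have hxlt : (b-1)*(d-1) < K * Real.exp K * Real.sqrt ((b-1)*(d-1)) := by
            -- x ≤ u < K c e ≤ K sqrt(x) exp K
            have h5 : (b-1)*(d-1) < K * (c * e) := by nlinarith
            have h6 : c * e ≤ Real.sqrt ((b-1)*(d-1)) * Real.exp K := by
              have := mul_le_mul hcs (le_of_lt h4) (by linarith) (Real.sqrt_nonneg _)
              linarith
            calc (b-1)*(d-1) < K * (c*e) := h5
              _ ≤ K * (Real.sqrt ((b-1)*(d-1)) * Real.exp K) :=
                  mul_le_mul_of_nonneg_left h6 hK0.le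
              _ = K * Real.exp K * Real.sqrt ((b-1)*(d-1)) := by ring
          have hsK : Real.sqrt ((b-1)*(d-1)) ≤ K * Real.exp K := by
            by_contra hcon
            push_neg at hcon
            have hcon2 := mul_lt_mul_of_pos_right hcon hs0
            linarith [hself, hxlt, hcon2]
          have hxb : (b-1)*(d-1) ≤ K * Real.exp K * ((b + d - 2)/2) := by
            calc (b-1)*(d-1) = Real.sqrt ((b-1)*(d-1)) * Real.sqrt ((b-1)*(d-1)) := hself.symm
              _ ≤ (K * Real.exp K) * Real.sqrt ((b-1)*(d-1)) :=
                  mul_le_mul_of_nonneg_right hsK (Real.sqrt_nonneg _)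
              _ ≤ (K * Real.exp K) * ((b + d - 2)/2) :=
                  mul_le_mul_of_nonneg_left hsqx hKE
          have hfin : K * Real.exp K * ((b + d - 2)/2) ≤
              (1 + K * Real.exp K) *
                (b * Real.log b + c * Real.log c + d * Real.log d + e * Real.log e) := by
            have h7 : (b + d - 2)/2 ≤ b * Real.log b + c * Real.log c + d * Real.log d + e * Real.log e := by
              linarith
            have h8 := mul_le_mul_of_nonneg_left h7 hKE
            have h9 : (1 + K * Real.exp K) *
                (b * Real.log b + c * Real.log c + d * Real.log d + e * Real.log e) =
                (b * Real.log b + c * Real.log c + d * Real.log d + e * Real.log e) +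
                K * Real.exp K *
                (b * Real.log b + c * Real.log c + d * Real.log d + e * Real.log e) := by
              ring
            linarith [h8, h9, hS0]
          linarith



theorem source_term_control (ν : ℝ) (hν : 0 < ν) :
    ∃ C₁ : ℝ, 0 < C₁ ∧
      ∀ a : Fin 4 → ℝ, (∀ i, 0 ≤ a i) →
        -(a 0 * a 2 - a 1 * a 3) *
            (Real.log ((1 + a 0) * (1 + a 2)) - Real.log ((1 + a 1) * (1 + a 3))) +
          ν / 2 * ∑ i, (a 0 * a 2 + a 1 * a 3) / (1 + a i)
          ≤ C₁ * ∑ i, (1 + a i) * Real.log (1 + a i) := by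
  set K : ℝ := 2 * Real.exp (4 * ν) with hKdef
  have hK0 : (0:ℝ) < K := by positivity
  have hK2 : (2:ℝ) ≤ K := by
    have := Real.one_le_exp (show (0:ℝ) ≤ 4 * ν by positivity)
    nlinarith
  have hlogKeq : Real.log K = Real.log 2 + 4 * ν := by
    rw [hKdef, Real.log_mul two_ne_zero (Real.exp_ne_zero _), Real.log_exp]
  have hlogK : 0 < Real.log K := Real.log_pos (by linarith)
  have hlogKge : 4 * ν ≤ Real.log K := by
    have := Real.log_pos (show (1:ℝ) < 2 by norm_num)
    linarith [hlogKeq]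
  refine ⟨2 + ν / 2 * (1 + 4 * (1 + K * Real.exp K)), by positivity, ?_⟩
  intro a ha
  have h0 := ha 0; have h1 := ha 1; have h2 := ha 2; have h3 := ha 3
  simp only [Fin.sum_univ_four]
  set b1 : ℝ := 1 + a 0 with hb1
  set b2 : ℝ := 1 + a 1 with hb2
  set b3 : ℝ := 1 + a 2 with hb3
  set b4 : ℝ := 1 + a 3 with hb4
  have hb1' : (1:ℝ) ≤ b1 := by rw [hb1]; linarith
  have hb2' : (1:ℝ) ≤ b2 := by rw [hb2]; linarith
  have hb3' : (1:ℝ) ≤ b3 := by rw [hb3]; linarith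
  have hb4' : (1:ℝ) ≤ b4 := by rw [hb4]; linarith
  have hb10 : (0:ℝ) < b1 := by linarith
  have hb20 : (0:ℝ) < b2 := by linarith
  have hb30 : (0:ℝ) < b3 := by linarith
  have hb40 : (0:ℝ) < b4 := by linarith
  set x : ℝ := a 0 * a 2 with hx
  set y : ℝ := a 1 * a 3 with hy
  set L1 : ℝ := Real.log b1 with hL1
  set L2 : ℝ := Real.log b2 with hL2
  set L3 : ℝ := Real.log b3 with hL3
  set L4 : ℝ := Real.log b4 with hL4
  have hL1n : 0 ≤ L1 := Real.log_nonneg hb1'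
  have hL2n : 0 ≤ L2 := Real.log_nonneg hb2'
  have hL3n : 0 ≤ L3 := Real.log_nonneg hb3'
  have hL4n : 0 ≤ L4 := Real.log_nonneg hb4'
  set D : ℝ := (b1 * b3 - b2 * b4) * (Real.log (b1 * b3) - Real.log (b2 * b4)) with hD
  set S : ℝ := b1 * L1 + b2 * L2 + b3 * L3 + b4 * L4 with hS
  have hD0 : 0 ≤ D := logpair _ _ (by positivity) (by positivity)
  have hS0 : 0 ≤ S := by
    have q1 := mul_nonneg hb10.le hL1n; have q2 := mul_nonneg hb20.le hL2n
    have q3 := mul_nonneg hb30.le hL3n; have q4 := mul_nonneg hb40.le hL4n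
    rw [hS]; linarith
  clear_value K b1 b2 b3 b4 x y L1 L2 L3 L4 D S
  have hent1 : b1 - 1 ≤ b1 * L1 := by rw [hL1]; exact ent_ge b1 hb1'
  have hent2 : b2 - 1 ≤ b2 * L2 := by rw [hL2]; exact ent_ge b2 hb2'
  have hent3 : b3 - 1 ≤ b3 * L3 := by rw [hL3]; exact ent_ge b3 hb3'
  have hent4 : b4 - 1 ≤ b4 * L4 := by rw [hL4]; exact ent_ge b4 hb4'
  -- reaction term
  have hlogu : Real.log (b1 * b3) = L1 + L3 := by rw [hL1, hL3]; exact Real.log_mul (ne_of_gt hb10) (ne_of_gt hb30)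
  have hlogv : Real.log (b2 * b4) = L2 + L4 := by rw [hL2, hL4]; exact Real.log_mul (ne_of_gt hb20) (ne_of_gt hb40)
  have hT : -(x - y) * (Real.log (b1 * b3) - Real.log (b2 * b4)) ≤ -D + 2 * S := by
    have hxid : -(x - y) = (b2 * b4 - b1 * b3) + ((b1 + b3) - (b2 + b4)) := by
      rw [hx, hy, hb1, hb2, hb3, hb4]; ring
    rw [hxid, add_mul]
    have heqD : (b2 * b4 - b1 * b3) * (Real.log (b1 * b3) - Real.log (b2 * b4)) = -D := by
      rw [hD]; ring
    have p13 : 0 ≤ (b1 - b3) * (L1 - L3) := by rw [hL1, hL3]; exact logpair b1 b3 hb10 hb30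
    have p24 : 0 ≤ (b2 - b4) * (L2 - L4) := by rw [hL2, hL4]; exact logpair b2 b4 hb20 hb40
    have hR : ((b1 + b3) - (b2 + b4)) * (Real.log (b1 * b3) - Real.log (b2 * b4)) ≤ 2 * S := by
      rw [hlogu, hlogv, hS]
      linarith only [p13, p24, mul_nonneg hb10.le hL2n, mul_nonneg hb10.le hL4n,
        mul_nonneg hb30.le hL2n, mul_nonneg hb30.le hL4n, mul_nonneg hb20.le hL1n,
        mul_nonneg hb20.le hL3n, mul_nonneg hb40.le hL1n, mul_nonneg hb40.le hL3n]
    linarith only [heqD, hR]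
  -- good noise terms
  have hb31 : b3 - 1 = a 2 := by rw [hb3]; ring
  have hb11 : b1 - 1 = a 0 := by rw [hb1]; ring
  have hb21 : b2 - 1 = a 1 := by rw [hb2]; ring
  have hb41 : b4 - 1 = a 3 := by rw [hb4]; ring
  have hg1 : x / b1 ≤ b3 * L3 := by
    have ha2 : a 2 ≤ b3 * L3 := by linarith [hb31, hent3]
    have hm := mul_le_mul_of_nonneg_left ha2 h0
    rw [div_le_iff₀ hb10, hx, hb1]
    have hq : 0 ≤ b3 * L3 := mul_nonneg hb30.le hL3n
    linarith only [hm, hq, ha2]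
  have hg3 : x / b3 ≤ b1 * L1 := by
    have ha0 : a 0 ≤ b1 * L1 := by linarith [hb11, hent1]
    have hm := mul_le_mul_of_nonneg_left ha0 h2
    rw [div_le_iff₀ hb30, hx, hb3]
    have hq : 0 ≤ b1 * L1 := mul_nonneg hb10.le hL1n
    linarith only [hm, hq, ha0]
  have hg2 : y / b2 ≤ b4 * L4 := by
    have ha3 : a 3 ≤ b4 * L4 := by linarith [hb41, hent4]
    have hm := mul_le_mul_of_nonneg_left ha3 h1
    rw [div_le_iff₀ hb20, hy, hb2]
    have hq : 0 ≤ b4 * L4 := mul_nonneg hb40.le hL4n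
    linarith only [hm, hq, ha3]
  have hg4 : y / b4 ≤ b2 * L2 := by
    have ha1 : a 1 ≤ b2 * L2 := by linarith [hb21, hent2]
    have hm := mul_le_mul_of_nonneg_left ha1 h3
    rw [div_le_iff₀ hb40, hy, hb4]
    have hq : 0 ≤ b2 * L2 := mul_nonneg hb20.le hL2n
    linarith only [hm, hq, ha1]
  -- cross noise terms
  have hxeq : x = (b1 - 1) * (b3 - 1) := by rw [hx, hb1, hb3]; ring
  have hyeq : y = (b2 - 1) * (b4 - 1) := by rw [hy, hb2, hb4]; ring
  have hc2 : x / b2 ≤ 2 / Real.log K * D + (1 + K * Real.exp K) * S := by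
    have h := cross1 K b1 b2 b3 b4 hK2 hb1' hb2' hb3' hb4'
    rw [← hxeq] at h
    rw [hD, hS, hL1, hL2, hL3, hL4]
    linarith only [h]
  have hc4 : x / b4 ≤ 2 / Real.log K * D + (1 + K * Real.exp K) * S := by
    have h := cross1 K b1 b4 b3 b2 hK2 hb1' hb4' hb3' hb2'
    rw [← hxeq, mul_comm b4 b2] at h
    rw [hD, hS, hL1, hL2, hL3, hL4]
    linarith only [h]
  have hc1 : y / b1 ≤ 2 / Real.log K * D + (1 + K * Real.exp K) * S := by
    have h := cross1 K b2 b1 b4 b3 hK2 hb2' hb1' hb4' hb3'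
    rw [← hyeq] at h
    have heq : 2 / Real.log K * ((b2 * b4 - b1 * b3) * (Real.log (b2 * b4) - Real.log (b1 * b3)))
        = 2 / Real.log K * D := by
      rw [hD]; ring
    rw [heq] at h
    rw [hS, hL1, hL2, hL3, hL4]
    linarith only [h]
  have hc3 : y / b3 ≤ 2 / Real.log K * D + (1 + K * Real.exp K) * S := by
    have h := cross1 K b2 b3 b4 b1 hK2 hb2' hb3' hb4' hb1'
    rw [← hyeq, mul_comm b3 b1] at h
    have heq : 2 / Real.log K * ((b2 * b4 - b1 * b3) * (Real.log (b2 * b4) - Real.log (b1 * b3)))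
        = 2 / Real.log K * D := by
      rw [hD]; ring
    rw [heq] at h
    rw [hS, hL1, hL2, hL3, hL4]
    linarith only [h]
  -- noise total
  have hsum : (x + y) / b1 + (x + y) / b2 + (x + y) / b3 + (x + y) / b4 ≤
      S + 4 * (2 / Real.log K * D + (1 + K * Real.exp K) * S) := by
    rw [add_div, add_div, add_div, add_div]
    have hgsum : x / b1 + y / b2 + x / b3 + y / b4 ≤ S := by
      linarith only [hS, hg1, hg2, hg3, hg4]
    have hcsum : y / b1 + x / b2 + y / b3 + x / b4 ≤
        4 * (2 / Real.log K * D + (1 + K * Real.exp K) * S) := by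
      linarith only [hc1, hc2, hc3, hc4]
    linarith only [hgsum, hcsum]
  have hN : ν / 2 * ((x + y) / b1 + (x + y) / b2 + (x + y) / b3 + (x + y) / b4) ≤
      ν / 2 * (S + 4 * (2 / Real.log K * D + (1 + K * Real.exp K) * S)) :=
    mul_le_mul_of_nonneg_left hsum (by positivity)
  have hDabs : ν / 2 * (S + 4 * (2 / Real.log K * D + (1 + K * Real.exp K) * S)) ≤
      ν / 2 * S + D + 2 * ν * ((1 + K * Real.exp K) * S) := by
    have hle1 : 4 * ν / Real.log K ≤ 1 := (div_le_one hlogK).2 hlogKge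
    have hD4 : 4 * ν / Real.log K * D ≤ D := by
      calc 4 * ν / Real.log K * D ≤ 1 * D := mul_le_mul_of_nonneg_right hle1 hD0
        _ = D := one_mul D
    have hexp : ν / 2 * (S + 4 * (2 / Real.log K * D + (1 + K * Real.exp K) * S)) =
        ν / 2 * S + 4 * ν / Real.log K * D + 2 * ν * ((1 + K * Real.exp K) * S) := by
      ring
    linarith only [hD4, hexp]
  have hCeq : (2 + ν / 2 * (1 + 4 * (1 + K * Real.exp K))) * S =
      2 * S + ν / 2 * S + 2 * ν * ((1 + K * Real.exp K) * S) := by ring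
  linarith only [hT, hN, hDabs, hCeq, hD0, hS0]
end

section
/- Define $\Psi(a) = \int_0^a \sqrt{\Phi(s)/(1+s)}\, ds$ and $\Phi(s) = (1+s)\ln(1+s) - s$. There is a constant $C > 0$ such that for all $a \geq 0$, $|\Psi(a)|^2 \ln(1+a) \leq C\, |\Phi(a)|^2$. -/
/-!
On `[0, a]` the integrand `√(Φ(s)/(1+s)) = √(log(1+s) - s/(1+s))` is at most `√(log(1+a))`, so
`Ψ(a)² log(1+a) ≤ (a log(1+a))²`. The classical bound `log(1+a) ≥ 2a/(2+a)` is equivalent to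
`a log(1+a) ≤ 2Φ(a)`, which gives the claim with `C = 4`.
-/

open Real

lemma one_add_mul_log_one_add_sub_div_le_log {s : ℝ} (hs : 0 ≤ s) :
    ((1 + s) * log (1 + s) - s) / (1 + s) ≤ log (1 + s) := by
  have h1s : 0 < 1 + s := by linarith
  rw [div_le_iff₀ h1s]
  nlinarith [log_nonneg (by linarith : (1 : ℝ) ≤ 1 + s)]

lemma abs_integral_sqrt_le_mul_sqrt_log {a : ℝ} (ha : 0 ≤ a) :
    |∫ s in (0:ℝ)..a, √(((1 + s) * log (1 + s) - s) / (1 + s))| ≤ √(log (1 + a)) * a := by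
  have hbound : ∀ s ∈ Set.uIoc 0 a,
      ‖√(((1 + s) * log (1 + s) - s) / (1 + s))‖ ≤ √(log (1 + a)) := by
    rintro s ⟨hs0, hsa⟩
    rw [min_eq_left ha] at hs0
    rw [max_eq_right ha] at hsa
    rw [norm_of_nonneg (sqrt_nonneg _)]
    refine sqrt_le_sqrt ((one_add_mul_log_one_add_sub_div_le_log hs0.le).trans ?_)
    exact log_le_log (by linarith) (by linarith)
  simpa [abs_of_nonneg ha] using intervalIntegral.norm_integral_le_of_norm_le_const hbound

lemma mul_log_one_add_le_two_mul {a : ℝ} (ha : 0 ≤ a) :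
    a * log (1 + a) ≤ 2 * ((1 + a) * log (1 + a) - a) := by
  have h := le_log_one_add_of_nonneg ha
  rw [div_le_iff₀ (by linarith)] at h
  linarith

theorem Psi_sq_log_le_Phi_sq :
    ∃ C : ℝ, 0 < C ∧ ∀ a : ℝ, 0 ≤ a →
      |∫ s in (0:ℝ)..a, Real.sqrt (((1 + s) * Real.log (1 + s) - s) / (1 + s))| ^ 2
          * Real.log (1 + a)
        ≤ C * |(1 + a) * Real.log (1 + a) - a| ^ 2 := by
  refine ⟨4, by norm_num, fun a ha => ?_⟩
  have hL : 0 ≤ log (1 + a) := log_nonneg (by linarith)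
  have hPsi := abs_integral_sqrt_le_mul_sqrt_log ha
  have hPhi := mul_log_one_add_le_two_mul ha
  calc |∫ s in (0:ℝ)..a, √(((1 + s) * log (1 + s) - s) / (1 + s))| ^ 2 * log (1 + a)
      ≤ (√(log (1 + a)) * a) ^ 2 * log (1 + a) := by gcongr
    _ = (a * log (1 + a)) ^ 2 := by rw [mul_pow, sq_sqrt hL]; ring
    _ ≤ (2 * ((1 + a) * log (1 + a) - a)) ^ 2 := by gcongr
    _ = 4 * |(1 + a) * log (1 + a) - a| ^ 2 := by rw [mul_pow, sq_abs]; norm_num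
end

section
/- Define $g(a) = a^3 \mathbf{1}_{0 \leq a \leq 1} + a^2 \mathbf{1}_{a > 1}$ and $\Psi(a) = \int_0^a \sqrt{((1+s)\ln(1+s)-s)/(1+s)}\, ds$. There exists a constant $C > 0$ such that $g(a)\ln(1+a) \leq C\,|\Psi(a)|^2$ for all $a \geq 0$. -/
/-!
Write `Ψ(a) = ∫₀ᵃ √(φ(s)/(1+s))` with `φ(s) = (1+s)log(1+s) - s = ∫₁^{1+s} log u`. Since `log` is
nonnegative on `[1, ∞)` and increasing, `φ(s) ≥ (s/2) log(1 + s/2)`, so on `[a/2, a]` the integrand is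
at least `√(a log(1 + a/4) / (4(1+a)))`. Keeping only this half of the integral and using
`log(1+a) ≤ 4 log(1 + a/4)` gives `a³ log(1+a) ≤ 64 (1+a) Ψ(a)²`, and `g(a)(1+a) ≤ 2a³` finishes.
-/

open Real Set intervalIntegral

lemma sub_mul_le_integral_of_nonneg_of_le {f : ℝ → ℝ} {a b c m : ℝ} (hab : a ≤ b) (hbc : b ≤ c)
    (hf : IntervalIntegrable f MeasureTheory.volume a c) (h_nonneg : ∀ x ∈ Icc a b, 0 ≤ f x)
    (h_le : ∀ x ∈ Icc b c, m ≤ f x) :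
    (c - b) * m ≤ ∫ x in a..c, f x := by
  have hfab : IntervalIntegrable f MeasureTheory.volume a b :=
    hf.mono_set (uIcc_subset_uIcc_left (by rw [uIcc_of_le (hab.trans hbc)]; exact ⟨hab, hbc⟩))
  have hfbc : IntervalIntegrable f MeasureTheory.volume b c :=
    hf.mono_set (uIcc_subset_uIcc_right (by rw [uIcc_of_le (hab.trans hbc)]; exact ⟨hab, hbc⟩))
  have h_left : 0 ≤ ∫ x in a..b, f x := integral_nonneg hab h_nonneg
  have h_right : (c - b) * m ≤ ∫ x in b..c, f x := by
    simpa using integral_mono_on hbc intervalIntegrable_const hfbc h_le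
  rw [← integral_add_adjacent_intervals hfab hfbc]
  linarith

lemma half_mul_log_le_one_add_mul_log_sub {s : ℝ} (hs : 0 ≤ s) :
    s / 2 * log (1 + s / 2) ≤ (1 + s) * log (1 + s) - s := by
  have h_eq : (1 + s) * log (1 + s) - s = ∫ u in (1 : ℝ)..(1 + s), log u := by
    rw [integral_log]
    simp only [log_one, mul_zero]
    ring
  have h_cont : ContinuousOn log (Icc 1 (1 + s)) :=
    continuousOn_log.mono fun u hu => (zero_lt_one.trans_le hu.1).ne'
  rw [h_eq]
  convert sub_mul_le_integral_of_nonneg_of_le (b := 1 + s / 2) (by linarith) (by linarith)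
    (h_cont.intervalIntegrable_of_Icc (by linarith))
    (fun u hu => log_nonneg hu.1) (fun u hu => log_le_log (by linarith) hu.1) using 2
  ring

lemma log_one_add_le_four_mul_log_one_add_div_four {a : ℝ} (ha : 0 ≤ a) :
    log (1 + a) ≤ 4 * log (1 + a / 4) := by
  have h_pow : 1 + a ≤ (1 + a / 4) ^ 4 := by
    simpa [mul_div_cancel₀] using one_add_mul_le_pow (a := a / 4) (by linarith) 4
  calc log (1 + a) ≤ log ((1 + a / 4) ^ 4) := log_le_log (by linarith) h_pow
    _ = 4 * log (1 + a / 4) := by rw [log_pow]; norm_num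

lemma ite_pow_mul_one_add_le_two_mul_pow_three {a : ℝ} (ha : 0 ≤ a) :
    (if a ≤ 1 then a ^ 3 else a ^ 2) * (1 + a) ≤ 2 * a ^ 3 := by
  split_ifs with h
  · nlinarith [pow_nonneg ha 3]
  · nlinarith [sq_nonneg a]

noncomputable def psiDensity (s : ℝ) : ℝ := √(((1 + s) * log (1 + s) - s) / (1 + s))

lemma continuousOn_psiDensity : ContinuousOn psiDensity (Ici 0) := by
  have h_num : Continuous fun s : ℝ => (1 + s) * log (1 + s) - s :=
    (continuous_mul_log.comp (continuous_const.add continuous_id)).sub continuous_id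
  refine (h_num.continuousOn.div (continuous_const.add continuous_id).continuousOn
    fun s (hs : 0 ≤ s) => ?_).sqrt
  show 1 + s ≠ 0
  positivity

lemma sqrt_le_psiDensity {a s : ℝ} (hs : s ∈ Icc (a / 2) a) (ha : 0 ≤ a) :
    √(a / 4 * log (1 + a / 4) / (1 + a)) ≤ psiDensity s := by
  have hs0 : 0 ≤ s := by linarith [hs.1]
  have h_num : a / 4 * log (1 + a / 4) ≤ (1 + s) * log (1 + s) - s :=
    calc a / 4 * log (1 + a / 4) ≤ s / 2 * log (1 + s / 2) :=
          mul_le_mul (by linarith [hs.1]) (log_le_log (by linarith) (by linarith [hs.1]))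
            (log_nonneg (by linarith)) (by linarith)
      _ ≤ _ := half_mul_log_le_one_add_mul_log_sub hs0
  have h_num_nonneg : 0 ≤ a / 4 * log (1 + a / 4) :=
    mul_nonneg (by linarith) (log_nonneg (by linarith))
  exact sqrt_le_sqrt (div_le_div₀ (h_num_nonneg.trans h_num) h_num (by linarith)
    (by linarith [hs.2]))

lemma pow_three_mul_log_le_integral_psiDensity_sq {a : ℝ} (ha : 0 ≤ a) :
    a ^ 3 * log (1 + a) ≤ 64 * (1 + a) * (∫ s in (0 : ℝ)..a, psiDensity s) ^ 2 := by
  set q := a / 4 * log (1 + a / 4) / (1 + a) with hq_def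
  have hq : 0 ≤ q := div_nonneg (mul_nonneg (by linarith) (log_nonneg (by linarith))) (by linarith)
  have h_int : IntervalIntegrable psiDensity MeasureTheory.volume 0 a :=
    (continuousOn_psiDensity.mono Icc_subset_Ici_self).intervalIntegrable_of_Icc ha
  have h_lower : (a - a / 2) * √q ≤ ∫ s in (0 : ℝ)..a, psiDensity s :=
    sub_mul_le_integral_of_nonneg_of_le (by linarith) (by linarith) h_int
      (fun _ _ => sqrt_nonneg _) (fun _ hs => sqrt_le_psiDensity hs ha)
  have h_sq : a ^ 2 / 4 * q ≤ (∫ s in (0 : ℝ)..a, psiDensity s) ^ 2 := by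
    have := pow_le_pow_left₀ (mul_nonneg (by linarith) (sqrt_nonneg q)) h_lower 2
    rwa [mul_pow, sq_sqrt hq, show (a - a / 2) ^ 2 = a ^ 2 / 4 by ring] at this
  have h_log := log_one_add_le_four_mul_log_one_add_div_four ha
  calc a ^ 3 * log (1 + a) ≤ a ^ 3 * (4 * log (1 + a / 4)) :=
        mul_le_mul_of_nonneg_left h_log (pow_nonneg ha 3)
    _ = 64 * (1 + a) * (a ^ 2 / 4 * q) := by rw [hq_def]; field_simp; ring
    _ ≤ _ := mul_le_mul_of_nonneg_left h_sq (by linarith)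

theorem g_log_le_Psi_sq :
    ∃ C : ℝ, 0 < C ∧ ∀ a : ℝ, 0 ≤ a →
      (if a ≤ 1 then a ^ 3 else a ^ 2) * Real.log (1 + a)
        ≤ C * |∫ s in (0:ℝ)..a,
            Real.sqrt (((1 + s) * Real.log (1 + s) - s) / (1 + s))| ^ 2 := by
  refine ⟨128, by norm_num, fun a ha => ?_⟩
  rw [sq_abs]
  have h_log : 0 ≤ log (1 + a) := log_nonneg (by linarith)
  have h_g := mul_le_mul_of_nonneg_right (ite_pow_mul_one_add_le_two_mul_pow_three ha) h_log
  have h_Psi := pow_three_mul_log_le_integral_psiDensity_sq ha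
  refine le_of_mul_le_mul_right (a := 1 + a) ?_ (by linarith)
  unfold psiDensity at h_Psi
  linarith
end

section
/- For $a, \xi \geq 0$ set $a^\xi = (a-\xi)^+$, $a^{\xi*} = 1 + a^\xi$, and $\Phi(s) = (1+s)\ln(1+s) - s$. For all $0 \leq \zeta < \xi$ and $a \geq 0$: $\xi \ln(a^{\xi*}) \leq \frac{2\xi}{\xi - \zeta} \Phi(a^\zeta)$. -/
/-! Since `Φ' (s) = log (1 + s)` and `Φ` is convex, `Φ` lies above its tangent lines:
`Φ t + (s - t) log (1 + t) ≤ Φ s`. For `a > ξ` take `t = a - ξ`, `s = a - ζ`, so that `s - t = ξ - ζ`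
and `Φ t ≥ 0`; this gives `(ξ - ζ) log (1 + a^ξ) ≤ Φ (a^ζ)`. For `a ≤ ξ` the left side vanishes. -/

open Real

noncomputable def phi (s : ℝ) : ℝ := (1 + s) * log (1 + s) - s

lemma phi_zero : phi 0 = 0 := by simp [phi]

lemma phi_add_mul_log_le {s t : ℝ} (hs : -1 < s) (ht : -1 < t) :
    phi t + (s - t) * log (1 + t) ≤ phi s := by
  have hs' : 0 < 1 + s := by linarith
  have ht' : 0 < 1 + t := by linarith
  have hlog : 1 - (1 + t) / (1 + s) ≤ log (1 + s) - log (1 + t) := by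
    simpa [log_div hs'.ne' ht'.ne'] using one_sub_inv_le_log_of_pos (div_pos hs' ht')
  have hmul : s - t ≤ (1 + s) * (log (1 + s) - log (1 + t)) := by
    calc s - t = (1 + s) * (1 - (1 + t) / (1 + s)) := by field_simp; ring
      _ ≤ (1 + s) * (log (1 + s) - log (1 + t)) := mul_le_mul_of_nonneg_left hlog hs'.le
  unfold phi
  linarith

lemma phi_nonneg {s : ℝ} (hs : -1 < s) : 0 ≤ phi s := by
  simpa [phi_zero] using phi_add_mul_log_le hs neg_one_lt_zero

lemma sub_mul_log_one_add_posPart_le_phi {ζ ξ : ℝ} (hζξ : ζ < ξ) (a : ℝ) :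
    (ξ - ζ) * log (1 + (a - ξ)⁺) ≤ phi (a - ζ)⁺ := by
  rcases le_or_gt a ξ with haξ | hξa
  · rw [posPart_eq_zero.mpr (sub_nonpos.mpr haξ), add_zero, log_one, mul_zero]
    exact phi_nonneg (by linarith [posPart_nonneg (a - ζ)])
  · rw [posPart_eq_self.mpr (by linarith), posPart_eq_self.mpr (by linarith)]
    have htangent := phi_add_mul_log_le (s := a - ζ) (t := a - ξ) (by linarith) (by linarith)
    have hphi := phi_nonneg (s := a - ξ) (by linarith)
    rw [show a - ζ - (a - ξ) = ξ - ζ by ring] at htangent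
    linarith

theorem xi_log_truncation_bound_general (ζ ξ a : ℝ) (hζ : 0 ≤ ζ) (hζξ : ζ < ξ) :
    ξ * Real.log (1 + (a - ξ)⁺) ≤
      2 * ξ / (ξ - ζ) * ((1 + (a - ζ)⁺) * Real.log (1 + (a - ζ)⁺) - (a - ζ)⁺) := by
  have hgap : 0 < ξ - ζ := sub_pos.mpr hζξ
  have hξ : 0 ≤ ξ := hζ.trans hζξ.le
  have hphi : 0 ≤ phi (a - ζ)⁺ := phi_nonneg (by linarith [posPart_nonneg (a - ζ)])
  change _ ≤ 2 * ξ / (ξ - ζ) * phi (a - ζ)⁺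
  calc ξ * log (1 + (a - ξ)⁺) = ξ / (ξ - ζ) * ((ξ - ζ) * log (1 + (a - ξ)⁺)) := by
        field_simp
    _ ≤ ξ / (ξ - ζ) * phi (a - ζ)⁺ := by
        gcongr
        exact sub_mul_log_one_add_posPart_le_phi hζξ a
    _ ≤ 2 * ξ / (ξ - ζ) * phi (a - ζ)⁺ := by
        gcongr
        linarith

theorem xi_log_truncation_bound (ζ ξ a : ℝ) (hζ : 0 ≤ ζ) (hζξ : ζ < ξ) (ha : 0 ≤ a) :
    ξ * Real.log (1 + (a - ξ)⁺) ≤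
      2 * ξ / (ξ - ζ) * ((1 + (a - ζ)⁺) * Real.log (1 + (a - ζ)⁺) - (a - ζ)⁺) :=
  xi_log_truncation_bound_general ζ ξ a hζ hζξ
end
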